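/- arXiv:math/0411209 — 3 statements merged into one kernel-verified Lean document; each statement's English description precedes it below -/
import Mathlib

section
/- Let (X_n, f_{n,n+1}) be an inverse system indexed by ℕ, where each X_n is a nonempty compact Hausdorff topological space and each bonding map f_{n,n+1} : X_{n+1} → X_n is continuous and surjective. Let X_∞ be the inverse limit, with canonical projection maps f_{n,∞} : X_∞ → X_n. Suppose U_n ⊆ X_n (n = 0, 1, 2, ...) are dense open subsets such that f_{n,n+1}(U_{n+1}) ⊆ U_n for all n. Then for every n, the preimage f_{n,∞}⁻¹(U_n) is a dense open subset of X_∞. -/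
open Function

section Aux

variable {X : ℕ → Type*} [∀ n, Nonempty (X n)]

/-- Downward transition maps of the inverse system (junk below the base level). -/
noncomputable def invSysD (f : ∀ n, X (n + 1) → X n) (i : ℕ) : ∀ m, X m → X i :=
  Nat.rec (motive := fun m => X m → X i)
    (fun z => if h : 0 = i then h ▸ z else Classical.arbitrary _)
    (fun m ih z => if h : m + 1 = i then h ▸ z else ih (f m z))

theorem invSysD_zero (f : ∀ n, X (n + 1) → X n) (i : ℕ) (z : X 0) :
    invSysD f i 0 z = if h : 0 = i then h ▸ z else Classical.arbitrary _ := rfl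

theorem invSysD_succ (f : ∀ n, X (n + 1) → X n) (i m : ℕ) (z : X (m + 1)) :
    invSysD f i (m + 1) z =
      if h : m + 1 = i then h ▸ z else invSysD f i m (f m z) := rfl

theorem invSysD_self (f : ∀ n, X (n + 1) → X n) (i : ℕ) (z : X i) :
    invSysD f i i z = z := by
  cases i with
  | zero => rw [invSysD_zero, dif_pos rfl]
  | succ m => rw [invSysD_succ, dif_pos rfl]

theorem invSysD_step (f : ∀ n, X (n + 1) → X n) {i m : ℕ} (h : i ≤ m) (z : X (m + 1)) :
    invSysD f i (m + 1) z = invSysD f i m (f m z) := by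
  rw [invSysD_succ, dif_neg (by omega)]

theorem invSysD_thread (f : ∀ n, X (n + 1) → X n) (y : ∀ k, X k)
    (hy : ∀ k, f k (y (k + 1)) = y k) {i m : ℕ} (h : i ≤ m) :
    invSysD f i m (y m) = y i := by
  induction m with
  | zero =>
    obtain rfl : i = 0 := Nat.le_zero.mp h
    exact invSysD_self f 0 (y 0)
  | succ m ih =>
    rcases Nat.eq_or_lt_of_le h with h' | h'
    · subst h'; exact invSysD_self f (m + 1) (y (m + 1))
    · rw [invSysD_step f (by omega), hy m]; exact ih (by omega)

theorem invSysD_mapsTo (f : ∀ n, X (n + 1) → X n) (U : ∀ n, Set (X n))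
    (hU_map : ∀ n, (f n) '' U (n + 1) ⊆ U n) {i m : ℕ} (h : i ≤ m)
    {z : X m} (hz : z ∈ U m) : invSysD f i m z ∈ U i := by
  induction m with
  | zero =>
    obtain rfl : i = 0 := Nat.le_zero.mp h
    rwa [invSysD_self]
  | succ m ih =>
    rcases Nat.eq_or_lt_of_le h with h' | h'
    · subst h'; rwa [invSysD_self]
    · rw [invSysD_step f (by omega)]
      exact ih (by omega) (hU_map m ⟨z, hz, rfl⟩)

theorem invSysD_continuous [∀ n, TopologicalSpace (X n)] (f : ∀ n, X (n + 1) → X n)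
    (hf_cont : ∀ n, Continuous (f n)) (i : ℕ) : ∀ m, Continuous (invSysD f i m) := by
  intro m
  induction m with
  | zero =>
    rcases Nat.eq_zero_or_pos i with rfl | hi
    · have : invSysD f 0 0 = id := funext fun z => invSysD_self f 0 z
      rw [this]; exact continuous_id
    · have : invSysD f i 0 = fun _ => Classical.arbitrary (X i) := by
        funext z; rw [invSysD_zero, dif_neg (by omega)]
      rw [this]; exact continuous_const
  | succ m ih =>
    by_cases h : i = m + 1
    · subst h
      have : invSysD f (m + 1) (m + 1) = id := funext fun z => invSysD_self f (m + 1) z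
      rw [this]; exact continuous_id
    · have : invSysD f i (m + 1) = fun z => invSysD f i m (f m z) := by
        funext z; rw [invSysD_succ, dif_neg (fun h' => h h'.symm)]
      rw [this]; exact ih.comp (hf_cont m)

theorem invSysD_f (f : ∀ n, X (n + 1) → X n) :
    ∀ l k, k + 1 ≤ l → ∀ w : X l, f k (invSysD f (k + 1) l w) = invSysD f k l w := by
  intro l
  induction l with
  | zero => omega
  | succ l ih =>
    intro k h w
    rcases Nat.eq_or_lt_of_le h with h' | h'
    · obtain rfl : k = l := by omega
      rw [invSysD_self, invSysD_step f (le_refl k), invSysD_self]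
    · rw [invSysD_step f (by omega), invSysD_step f (by omega), ih k (by omega)]

/-- Through any point of any level there is a thread of the inverse system. -/
theorem invSys_exists_thread (f : ∀ n, X (n + 1) → X n)
    (hf_surj : ∀ n, Function.Surjective (f n)) (m : ℕ) (z : X m) :
    ∃ y : {x : ∀ k, X k // ∀ k, f k (x (k + 1)) = x k}, y.1 m = z := by
  -- forward extension by surjectivity
  let a : ∀ j, X (m + j) := fun j =>
    Nat.rec z (fun j aj => surjInv (hf_surj (m + j)) aj) j
  have ha : ∀ j, f (m + j) (a (j + 1)) = a j := fun j =>
    surjInv_eq (hf_surj (m + j)) (a j)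
  let t : ∀ k, X k := fun k => invSysD f k (m + k) (a k)
  have ht : ∀ k, f k (t (k + 1)) = t k := by
    intro k
    show f k (invSysD f (k + 1) (m + k + 1) (a (k + 1))) = invSysD f k (m + k) (a k)
    rw [invSysD_f f (m + k + 1) k (by omega), invSysD_step f (by omega), ha k]
  have hz : ∀ j, invSysD f m (m + j) (a j) = z := by
    intro j
    induction j with
    | zero => exact invSysD_self f m z
    | succ j ih =>
      show invSysD f m (m + j + 1) (a (j + 1)) = z
      rw [invSysD_step f (by omega), ha j, ih]
  exact ⟨⟨t, ht⟩, hz m⟩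

end Aux

/-- In an inverse system of nonempty compact Hausdorff spaces with surjective continuous
bonding maps, if `U n ⊆ X n` are dense open sets with `f n '' U (n+1) ⊆ U n`, then the
preimage of each `U n` under the canonical projection from the inverse limit is a dense
open subset of the inverse limit. -/
theorem preimage_dense_open_in_inverse_limit
    {X : ℕ → Type*} [∀ n, TopologicalSpace (X n)]
    [∀ n, CompactSpace (X n)] [∀ n, T2Space (X n)] [∀ n, Nonempty (X n)]
    (f : ∀ n, X (n + 1) → X n)
    (hf_cont : ∀ n, Continuous (f n))
    (hf_surj : ∀ n, Function.Surjective (f n))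
    (U : ∀ n, Set (X n))
    (hU_open : ∀ n, IsOpen (U n))
    (hU_dense : ∀ n, Dense (U n))
    (hU_map : ∀ n, (f n) '' U (n + 1) ⊆ U n)
    (n : ℕ) :
    IsOpen {x : {x : ∀ m, X m // ∀ m, f m (x (m + 1)) = x m} | x.1 n ∈ U n} ∧
      Dense {x : {x : ∀ m, X m // ∀ m, f m (x (m + 1)) = x m} | x.1 n ∈ U n} := by
  constructor
  · exact (hU_open n).preimage ((continuous_apply n).comp continuous_subtype_val)
  · rw [dense_iff_inter_open]
    intro V hV ⟨x, hxV⟩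
    obtain ⟨O, hO, rfl⟩ := isOpen_induced_iff.mp hV
    obtain ⟨F, W, hW, hWO⟩ := isOpen_pi_iff.mp hO x.1 hxV
    set m : ℕ := n + F.sup id with hm
    have hle : ∀ i ∈ F, i ≤ m := fun i hi => le_trans (Finset.le_sup (f := id) hi) (by omega)
    set G : Set (X m) := ⋂ i ∈ F, invSysD f i m ⁻¹' (W i) with hG
    have hGopen : IsOpen G := isOpen_biInter_finset fun i hi =>
      (hW i hi).1.preimage (invSysD_continuous f hf_cont i m)
    have hxG : x.1 m ∈ G := by
      rw [hG]
      refine Set.mem_iInter₂.mpr fun i hi => ?_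
      show invSysD f i m (x.1 m) ∈ W i
      rw [invSysD_thread f x.1 x.2 (hle i hi)]
      exact (hW i hi).2
    obtain ⟨z, hzG, hzU⟩ := (hU_dense m).inter_open_nonempty G hGopen ⟨x.1 m, hxG⟩
    obtain ⟨y, hy⟩ := invSys_exists_thread f hf_surj m z
    refine ⟨y, ?_, ?_⟩
    · show y.1 ∈ O
      apply hWO
      intro i hi
      have := Set.mem_iInter₂.mp hzG i hi
      rw [← invSysD_thread f y.1 y.2 (hle i hi), hy]
      exact this
    · show y.1 n ∈ U n
      rw [← invSysD_thread f y.1 y.2 (show n ≤ m by omega), hy]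
      exact invSysD_mapsTo f U hU_map (show n ≤ m by omega) hzU
end

section
/- Let (X_n, f_{n,n+1}) be an inverse system indexed by ℕ, where each X_n is a nonempty compact Hausdorff topological space and each bonding map f_{n,n+1} : X_{n+1} → X_n is continuous and surjective. Let X_∞ be the inverse limit with canonical projections f_{n,∞} : X_∞ → X_n. Suppose U_n ⊆ X_n (n = 0, 1, 2, ...) are dense open subsets such that f_{n,n+1}(U_{n+1}) ⊆ U_n for all n. Then the intersection ⋂_{n=0}^{∞} f_{n,∞}⁻¹(U_n) is dense in X_∞. -/
/-!
The inverse limit `X∞` is compact Hausdorff, hence a Baire space, and each `f_{n,∞}⁻¹(U n)` is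
open; so it suffices that each of these preimages is dense. Every neighbourhood of a thread
contains a cylinder `f_{m,∞}⁻¹(V)` with `m ≥ n` and `V` a neighbourhood in `X m`. Since `U m` is
dense it meets `V`, and since the projections are surjective some thread passes through a point
of `U m ∩ V`; pushing down along the bonding maps, this thread lies in `U n` at level `n`.
-/

open Set Filter Topology Function

section

variable {X : ℕ → Type*} (f : ∀ n, X (n + 1) → X n)

abbrev InverseLimit : Type _ := {x : ∀ n, X n // ∀ n, f n (x (n + 1)) = x n}

namespace InverseLimit

variable {f}

theorem mem_of_le {U : ∀ n, Set (X n)} (hU : ∀ n, MapsTo (f n) (U (n + 1)) (U n))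
    (x : InverseLimit f) {m n : ℕ} (hnm : n ≤ m) (hx : x.1 m ∈ U m) : x.1 n ∈ U n :=
  Nat.decreasingInduction (motive := fun k _ => x.1 k ∈ U k)
    (fun k _ hk => x.2 k ▸ hU k hk) hx hnm

theorem surjective_proj (hf : ∀ n, Surjective (f n)) (m : ℕ) :
    Surjective fun x : InverseLimit f => x.1 m := by
  induction m generalizing X f with
  | zero =>
    intro y
    exact ⟨⟨fun n => Nat.rec (motive := X) y (fun n z => surjInv (hf n) z) n,
      fun n => surjInv_eq (hf n) _⟩, rfl⟩
  | succ m ih =>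
    intro y
    -- a thread of the shifted system `n ↦ X (n + 1)`, extended one step down to level `0`
    obtain ⟨w, hw⟩ :=
      ih (X := fun n => X (n + 1)) (f := fun n => f (n + 1)) (fun n => hf (n + 1)) y
    refine ⟨⟨fun n => Nat.rec (motive := X) (f 0 (w.1 0)) (fun n _ => w.1 n) n, ?_⟩, hw⟩
    rintro (_ | n)
    · rfl
    · exact w.2 n

theorem isClosed_setOf [∀ n, TopologicalSpace (X n)] [∀ n, T2Space (X n)]
    (hf : ∀ n, Continuous (f n)) :
    IsClosed {x : ∀ n, X n | ∀ n, f n (x (n + 1)) = x n} := by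
  simp only [ofPred_forall]
  exact isClosed_iInter fun n => isClosed_eq (by fun_prop) (by fun_prop)

theorem compactSpace [∀ n, TopologicalSpace (X n)] [∀ n, CompactSpace (X n)] [∀ n, T2Space (X n)]
    (hf : ∀ n, Continuous (f n)) : CompactSpace (InverseLimit f) :=
  isCompact_iff_compactSpace.mp (isClosed_setOf hf).isCompact

end InverseLimit

/-- The set of `y : X m` whose images at every level `i ≤ m` lie in `t i`; its preimage in the
inverse limit is the cylinder `{x | ∀ i ≤ m, x i ∈ t i}`. -/
def cylinderBase (t : ∀ n, Set (X n)) : ∀ n, Set (X n)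
  | 0 => t 0
  | n + 1 => t (n + 1) ∩ f n ⁻¹' cylinderBase t n

section cylinderBase

variable {f} {t : ∀ n, Set (X n)}

theorem cylinderBase_subset (n : ℕ) : cylinderBase f t n ⊆ t n := by
  cases n
  · exact subset_rfl
  · exact inter_subset_left

theorem mapsTo_cylinderBase (n : ℕ) :
    MapsTo (f n) (cylinderBase f t (n + 1)) (cylinderBase f t n) :=
  fun _ hy => hy.2

theorem InverseLimit.mem_of_mem_cylinderBase (x : InverseLimit f) {m i : ℕ} (hi : i ≤ m)
    (hx : x.1 m ∈ cylinderBase f t m) : x.1 i ∈ t i :=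
  cylinderBase_subset i (mem_of_le mapsTo_cylinderBase x hi hx)

theorem cylinderBase_mem_nhds [∀ n, TopologicalSpace (X n)] (hf : ∀ n, Continuous (f n))
    (x : InverseLimit f) (ht : ∀ n, t n ∈ 𝓝 (x.1 n)) (n : ℕ) :
    cylinderBase f t n ∈ 𝓝 (x.1 n) := by
  induction n with
  | zero => exact ht 0
  | succ n ih =>
    refine inter_mem (ht (n + 1)) ((hf n).continuousAt.preimage_mem_nhds ?_)
    rwa [x.2 n]

end cylinderBase

namespace InverseLimit

variable {f} [∀ n, TopologicalSpace (X n)]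

theorem exists_cylinder_subset (hf : ∀ n, Continuous (f n)) {x : InverseLimit f}
    {W : Set (InverseLimit f)} (hW : W ∈ 𝓝 x) (n : ℕ) :
    ∃ m ≥ n, ∃ V ∈ 𝓝 (x.1 m), {y : InverseLimit f | y.1 m ∈ V} ⊆ W := by
  obtain ⟨u, hu, huW⟩ := (mem_nhds_induced _ x W).mp hW
  rw [nhds_pi, Filter.mem_pi] at hu
  obtain ⟨I, hI, t, ht, hIu⟩ := hu
  obtain ⟨b, hb⟩ := hI.bddAbove
  refine ⟨max n b, le_max_left n b, cylinderBase f t (max n b),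
    cylinderBase_mem_nhds hf x ht _, fun y hy => huW (hIu fun i hi => ?_)⟩
  exact y.mem_of_mem_cylinderBase ((hb hi).trans (le_max_right n b)) hy

theorem dense_setOf_mem (hf_cont : ∀ n, Continuous (f n)) (hf_surj : ∀ n, Surjective (f n))
    {U : ∀ n, Set (X n)} (hU_dense : ∀ n, Dense (U n))
    (hU_map : ∀ n, MapsTo (f n) (U (n + 1)) (U n)) (n : ℕ) :
    Dense {x : InverseLimit f | x.1 n ∈ U n} := by
  refine fun x => mem_closure_iff_nhds.mpr fun W hW => ?_
  obtain ⟨m, hnm, V, hV, hVW⟩ := exists_cylinder_subset hf_cont hW n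
  obtain ⟨y, hyU, hyV⟩ := (hU_dense m).inter_nhds_nonempty hV
  obtain ⟨w, rfl⟩ := surjective_proj hf_surj m y
  exact ⟨w, hVW hyV, w.mem_of_le hU_map hnm hyU⟩

end InverseLimit

end

theorem iInter_preimage_dense_in_inverse_limit_general
    {X : ℕ → Type*} [∀ n, TopologicalSpace (X n)]
    [∀ n, CompactSpace (X n)] [∀ n, T2Space (X n)]
    (f : ∀ n, X (n + 1) → X n)
    (hf_cont : ∀ n, Continuous (f n))
    (hf_surj : ∀ n, Function.Surjective (f n))
    (U : ∀ n, Set (X n))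
    (hU_open : ∀ n, IsOpen (U n))
    (hU_dense : ∀ n, Dense (U n))
    (hU_map : ∀ n, (f n) '' U (n + 1) ⊆ U n) :
    Dense (⋂ n, {x : {x : ∀ m, X m // ∀ m, f m (x (m + 1)) = x m} | x.1 n ∈ U n}) := by
  have := InverseLimit.compactSpace hf_cont
  exact dense_iInter_of_isOpen
    (fun n => (hU_open n).preimage ((continuous_apply n).comp continuous_subtype_val))
    (InverseLimit.dense_setOf_mem hf_cont hf_surj hU_dense
      fun n => mapsTo_iff_image_subset.mpr (hU_map n))

/-- In an inverse system of nonempty compact Hausdorff spaces with surjective continuous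
bonding maps, if `U n ⊆ X n` are dense open sets with `f n '' U (n+1) ⊆ U n`, then the
intersection of the preimages of the `U n` under the canonical projections is dense in
the inverse limit. -/
theorem iInter_preimage_dense_in_inverse_limit
    {X : ℕ → Type*} [∀ n, TopologicalSpace (X n)]
    [∀ n, CompactSpace (X n)] [∀ n, T2Space (X n)] [∀ n, Nonempty (X n)]
    (f : ∀ n, X (n + 1) → X n)
    (hf_cont : ∀ n, Continuous (f n))
    (hf_surj : ∀ n, Function.Surjective (f n))
    (U : ∀ n, Set (X n))
    (hU_open : ∀ n, IsOpen (U n))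
    (hU_dense : ∀ n, Dense (U n))
    (hU_map : ∀ n, (f n) '' U (n + 1) ⊆ U n) :
    Dense (⋂ n, {x : {x : ∀ m, X m // ∀ m, f m (x (m + 1)) = x m} | x.1 n ∈ U n}) :=
  iInter_preimage_dense_in_inverse_limit_general f hf_cont hf_surj U hU_open hU_dense hU_map
end

section
/- Let (X_n, f_{n,n+1}) be an inverse system indexed by ℕ, where each X_n is a nonempty compact Hausdorff topological space and each bonding map f_{n,n+1} : X_{n+1} → X_n is continuous and surjective, and suppose U_n ⊆ X_n (n = 0, 1, 2, ...) are dense open subsets such that f_{n,n+1}(U_{n+1}) ⊆ U_n for all n. Then the set of points x₀ ∈ X₀ for which there exists a sequence (x_n)_{n≥0} with x_n ∈ X_n, f_{n,n+1}(x_{n+1}) = x_n for all n, x₀ the given point, and x_n ∈ U_n for all n ≥ 1, is dense in X₀. -/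
/-- In an inverse system of nonempty compact Hausdorff spaces with surjective continuous
bonding maps, if `U n ⊆ X n` are dense open sets with `f n '' U (n+1) ⊆ U n`, then the
set of points `x₀ ∈ X 0` admitting a compatible sequence `(x n)` with `x n ∈ U n` for all
`n ≥ 1` is dense in `X 0`. -/
theorem dense_start_points_of_compatible_sequences
    {X : ℕ → Type*} [∀ n, TopologicalSpace (X n)]
    [∀ n, CompactSpace (X n)] [∀ n, T2Space (X n)] [∀ n, Nonempty (X n)]
    (f : ∀ n, X (n + 1) → X n)
    (hf_cont : ∀ n, Continuous (f n))
    (hf_surj : ∀ n, Function.Surjective (f n))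
    (U : ∀ n, Set (X n))
    (hU_open : ∀ n, IsOpen (U n))
    (hU_dense : ∀ n, Dense (U n))
    (hU_map : ∀ n, (f n) '' U (n + 1) ⊆ U n) :
    Dense {x₀ : X 0 | ∃ x : ∀ n, X n, x 0 = x₀ ∧ (∀ n, f n (x (n + 1)) = x n) ∧
      ∀ n, 1 ≤ n → x n ∈ U n} := by
  rw [dense_iff_inter_open]
  rintro V hVopen ⟨v, hv⟩
  -- step: given a nonempty open set O in X n, find a nonempty open O' in X (n+1)
  -- with closure O' ⊆ f n ⁻¹' O and closure O' ⊆ U (n+1)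
  have step : ∀ n (O : Set (X n)), O.Nonempty → IsOpen O →
      ∃ O' : Set (X (n + 1)), O'.Nonempty ∧ IsOpen O' ∧
        closure O' ⊆ f n ⁻¹' O ∧ closure O' ⊆ U (n + 1) := by
    intro n O hOne hOopen
    obtain ⟨y, hy⟩ := hOne
    obtain ⟨z, hz⟩ := hf_surj n y
    have hWopen : IsOpen (f n ⁻¹' O ∩ U (n + 1)) :=
      ((hf_cont n).isOpen_preimage O hOopen).inter (hU_open (n + 1))
    have hWne : (f n ⁻¹' O ∩ U (n + 1)).Nonempty := by
      have := (hU_dense (n + 1)).inter_open_nonempty (f n ⁻¹' O)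
        ((hf_cont n).isOpen_preimage O hOopen) ⟨z, by simp [hz, hy]⟩
      exact this.imp fun a ha => ⟨ha.1, ha.2⟩
    obtain ⟨w, hw⟩ := hWne
    obtain ⟨O', hO'open, hsub, hcl⟩ := normal_exists_closure_subset
      (isClosed_singleton (x := w)) hWopen (Set.singleton_subset_iff.2 hw)
    exact ⟨O', ⟨w, hsub rfl⟩, hO'open, fun a ha => (hcl ha).1, fun a ha => (hcl ha).2⟩
  choose stepO stepne stepopen stepcl1 stepcl2 using step
  -- base: a nonempty open O₀ with closure ⊆ V
  obtain ⟨O0, hO0open, hO0sub, hO0cl⟩ := normal_exists_closure_subset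
    (isClosed_singleton (x := v)) hVopen (Set.singleton_subset_iff.2 hv)
  -- the recursive tower
  let T : ∀ n, Σ' (O : Set (X n)), O.Nonempty ∧ IsOpen O := fun n =>
    Nat.rec ⟨O0, ⟨v, hO0sub rfl⟩, hO0open⟩
      (fun k ih => ⟨stepO k ih.1 ih.2.1 ih.2.2, stepne k ih.1 ih.2.1 ih.2.2,
        stepopen k ih.1 ih.2.1 ih.2.2⟩) n
  let K : ∀ n, Set (X n) := fun n => closure (T n).1
  have hKne : ∀ n, (K n).Nonempty := fun n => (T n).2.1.closure
  have hKclosed : ∀ n, IsClosed (K n) := fun n => isClosed_closure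
  have hKstep : ∀ n, K (n + 1) ⊆ f n ⁻¹' K n := fun n a ha =>
    Set.preimage_mono subset_closure (stepcl1 n (T n).1 (T n).2.1 (T n).2.2 ha)
  have hKU : ∀ n, K (n + 1) ⊆ U (n + 1) := fun n =>
    stepcl2 n (T n).1 (T n).2.1 (T n).2.2
  have hK0 : K 0 ⊆ V := hO0cl
  -- the nested closed sets in the product space
  let C : ℕ → Set (∀ n, X n) := fun m =>
    {x | ∀ n < m, f n (x (n + 1)) = x n} ∩ (fun x => x m) ⁻¹' K m
  have hCclosed : ∀ m, IsClosed (C m) := by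
    intro m
    have h1 : {x : ∀ n, X n | ∀ n < m, f n (x (n + 1)) = x n} =
        ⋂ n, ⋂ (_ : n < m), {x | f n (x (n + 1)) = x n} := by
      ext x; simp [Set.mem_iInter]
    refine IsClosed.inter ?_ ((hKclosed m).preimage (continuous_apply m))
    rw [h1]
    exact isClosed_iInter fun n => isClosed_iInter fun _ =>
      isClosed_eq ((hf_cont n).comp (continuous_apply (n + 1))) (continuous_apply n)
  have hCne : ∀ m, ∀ y ∈ K m, ∃ x ∈ C m, x m = y := by
    intro m
    induction m with
    | zero =>
      intro y hy
      refine ⟨Function.update (fun n => Classical.arbitrary (X n)) 0 y, ⟨?_, ?_⟩, ?_⟩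
      · intro n hn; omega
      · simpa using hy
      · simp
    | succ m ih =>
      intro y hy
      obtain ⟨x, ⟨hxcompat, hxK⟩, hxm⟩ := ih (f m y) (hKstep m hy)
      refine ⟨Function.update x (m + 1) y, ⟨?_, ?_⟩, ?_⟩
      · intro n hn
        rcases Nat.lt_succ_iff_lt_or_eq.1 hn with h | h
        · rw [Function.update_of_ne (by omega), Function.update_of_ne (by omega)]
          exact hxcompat n h
        · subst h
          rw [Function.update_self, Function.update_of_ne (by omega), hxm]
      · simpa using hy
      · simp
  have hCanti : ∀ m, C (m + 1) ⊆ C m := by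
    rintro m x ⟨hcompat, hK'⟩
    refine ⟨fun n hn => hcompat n (by omega), ?_⟩
    have := hKstep m hK'
    simp only [Set.mem_preimage] at this ⊢
    rwa [hcompat m (by omega)] at this
  have hmain : (⋂ m, C m).Nonempty := by
    refine IsCompact.nonempty_iInter_of_sequence_nonempty_isCompact_isClosed C hCanti
      (fun m => ?_) ((hCclosed 0).isCompact) hCclosed
    obtain ⟨y, hy⟩ := hKne m
    obtain ⟨x, hx, -⟩ := hCne m y hy
    exact ⟨x, hx⟩
  obtain ⟨x, hx⟩ := hmain
  simp only [Set.mem_iInter] at hx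
  have hxK : ∀ m, x m ∈ K m := fun m => (hx m).2
  have hxcompat : ∀ n, f n (x (n + 1)) = x n := fun n => (hx (n + 1)).1 n (by omega)
  refine ⟨x 0, hK0 (hxK 0), x, rfl, hxcompat, ?_⟩
  intro n hn
  match n, hn with
  | k + 1, _ => exact hKU k (hxK (k + 1))
end
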